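/- arXiv:1804.04916 — 2 statements merged into one kernel-verified Lean document; each statement's English description precedes it below -/
import Mathlib

section
/- Let D ≥ 1 and L ≥ 1 be integers and 0 < a ≤ b. Let n_1,…,n_D ≥ 1 and let A be a real symmetric matrix with rows and columns indexed by I = {1,…,n_1} × ⋯ × {1,…,n_D}, such that A_{αβ} = 0 whenever max_{ℓ} |α_ℓ − β_ℓ| > L, and a·‖v‖² ≤ v'Av ≤ b·‖v‖² for all v ∈ ℝ^I. Then A is invertible, and there exist constants C > 0 and θ ∈ (0,1), depending only on a, b, L and D (not on n_1,…,n_D), such that |(A^{-1})_{αβ}| ≤ C·θ^{max_ℓ |α_ℓ − β_ℓ|} for all α, β ∈ I; consequently max_{α∈I} Σ_{β∈I} |(A^{-1})_{αβ}| ≤ C' for a constant C' depending only on a, b, L and D. (Multi-layer block-banded extension of the exponential inverse-decay bound, as established in the proof of Lemma SA-1.) -/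
open MeasureTheory Filter Metric Matrix
open scoped BigOperators ENNReal

noncomputable section

/-- Euclidean space `ℝ^d`. -/
abbrev Euc (d : ℕ) := EuclideanSpace ℝ (Fin d)

/-- Order `[q]` of a multi-index. -/
def mOrder {d : ℕ} (q : Fin d → ℕ) : ℕ := ∑ i, q i

/-- Partial derivative in the `i`-th coordinate direction. -/
noncomputable def lineD {d : ℕ} (i : Fin d) (f : Euc d → ℝ) : Euc d → ℝ :=
  fun x => lineDeriv ℝ f x (EuclideanSpace.single i 1)

/-- Multi-index partial derivative `∂^q f`. -/
noncomputable def mderiv {d : ℕ} (q : Fin d → ℕ) (f : Euc d → ℝ) : Euc d → ℝ :=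
  (List.finRange d).foldr (fun i g => (lineD i)^[q i] g) f

/-- Euclidean norm of a vector in `ℝ^K`. -/
noncomputable def eNorm {K : ℕ} (v : Fin K → ℝ) : ℝ := Real.sqrt (∑ k, v k ^ 2)

/-- Sup-norm of a vector. -/
noncomputable def vSupNorm {K : ℕ} (v : Fin K → ℝ) : ℝ := ⨆ k, |v k|

/-- Quadratic form `v'Av`. -/
def quadForm {ι : Type*} [Fintype ι] (A : Matrix ι ι ℝ) (v : ι → ℝ) : ℝ :=
  ∑ k, ∑ l, v k * A k l * v l

/-- Minimum eigenvalue of a symmetric matrix, as the infimum of its Rayleigh quotient. -/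
noncomputable def lamMin {ι : Type*} [Fintype ι] (A : Matrix ι ι ℝ) : ℝ :=
  sInf {r | ∃ v : ι → ℝ, ∑ k, v k ^ 2 = 1 ∧ r = quadForm A v}

/-- Maximum eigenvalue of a symmetric matrix, as the supremum of its Rayleigh quotient. -/
noncomputable def lamMax {ι : Type*} [Fintype ι] (A : Matrix ι ι ℝ) : ℝ :=
  sSup {r | ∃ v : ι → ℝ, ∑ k, v k ^ 2 = 1 ∧ r = quadForm A v}

/-- Maximum absolute row-sum norm `‖A‖_∞` of a matrix. -/
noncomputable def rowSumNorm {ι : Type*} [Fintype ι] (A : Matrix ι ι ℝ) : ℝ :=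
  ⨆ k, ∑ l, |A k l|

/-- Spectral norm (`ℓ²`-operator norm) of a matrix. -/
noncomputable def specNorm {ι : Type*} [Fintype ι] [DecidableEq ι] (A : Matrix ι ι ℝ) : ℝ :=
  ‖LinearMap.toContinuousLinearMap (Matrix.toEuclideanLin A)‖

/-- Open polyhedron: a finite intersection of open halfspaces. -/
def IsOpenPolyhedron {d : ℕ} (s : Set (Euc d)) : Prop :=
  ∃ (N : ℕ) (a : Fin N → Euc d) (b : Fin N → ℝ),
    s = {x | ∀ i, (inner ℝ (a i) x : ℝ) < b i}

/-!
With `c = 2 / (a + b)`, the matrix `B = 1 - c • A` is symmetric with `|v'Bv| ≤ r ‖v‖²` for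
`r = (b - a) / (a + b) < 1`, so its ℓ²-operator norm, and hence every entry of `B ^ k`, is at most
`r ^ k`. In the Neumann series `A⁻¹ = c ∑ B ^ k` the matrix `B ^ k` has bandwidth `k L`, so only
the terms with `k L ≥ d = max_ℓ |α_ℓ - β_ℓ|` contribute to `(A⁻¹)_{αβ}`; for `θ < 1` with
`r ≤ θ ^ (L + 1)` such a term is at most `θ ^ d θ ^ k`, whence `|(A⁻¹)_{αβ}| ≤ c θ ^ d / (1 - θ)`.
For the row sums take `σ < 1` with `θ ≤ σ ^ D`: then `θ ^ d ≤ ∏_ℓ σ ^ |α_ℓ - β_ℓ|`, and the sum over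
`β` factors into one-dimensional sums, each at most `∑_{z ∈ ℤ} σ ^ |z| = (1 + σ) / (1 - σ)`.
-/

section QuadForm

variable {ι : Type*} [Fintype ι]

lemma quadForm_eq_dotProduct (A : Matrix ι ι ℝ) (v : ι → ℝ) : quadForm A v = v ⬝ᵥ (A *ᵥ v) := by
  simp [quadForm, dotProduct, mulVec, Finset.mul_sum, mul_assoc]

lemma quadForm_one_sub_smul [DecidableEq ι] (c : ℝ) (A : Matrix ι ι ℝ) (v : ι → ℝ) :
    quadForm (1 - c • A) v = ∑ k, v k ^ 2 - c * quadForm A v := by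
  rw [quadForm_eq_dotProduct, quadForm_eq_dotProduct, sub_mulVec, one_mulVec, smul_mulVec,
    dotProduct_sub, dotProduct_smul, smul_eq_mul]
  simp [dotProduct, sq]

lemma isUnit_det_of_le_quadForm [DecidableEq ι] {A : Matrix ι ι ℝ} {a : ℝ} (ha : 0 < a)
    (hA : ∀ v, a * ∑ k, v k ^ 2 ≤ quadForm A v) : IsUnit A.det := by
  refine isUnit_iff_ne_zero.mpr fun hdet => ?_
  obtain ⟨v, hv, hAv⟩ := exists_mulVec_eq_zero_iff.mpr hdet
  have hS : ∑ k, v k ^ 2 ≤ 0 := by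
    have := hA v
    rw [quadForm_eq_dotProduct, hAv, dotProduct_zero] at this
    exact nonpos_of_mul_nonpos_right this ha
  refine hv (funext fun k => pow_eq_zero_iff two_ne_zero |>.mp ?_)
  exact (Finset.sum_eq_zero_iff_of_nonneg fun _ _ => sq_nonneg _).mp
    (hS.antisymm (Finset.sum_nonneg fun _ _ => sq_nonneg _)) k (Finset.mem_univ k)

lemma abs_quadForm_one_sub_smul_le [DecidableEq ι] {A : Matrix ι ι ℝ} {a b : ℝ} (ha : 0 < a)
    (hab : a ≤ b)
    (hA : ∀ v, a * ∑ k, v k ^ 2 ≤ quadForm A v ∧ quadForm A v ≤ b * ∑ k, v k ^ 2) (v : ι → ℝ) :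
    |quadForm (1 - (2 / (a + b)) • A) v| ≤ (b - a) / (a + b) * ∑ k, v k ^ 2 := by
  obtain ⟨hlow, hup⟩ := hA v
  have hpos : 0 < a + b := by linarith
  have hrewrite : ∑ k, v k ^ 2 - 2 / (a + b) * quadForm A v
      = ((a + b) * ∑ k, v k ^ 2 - 2 * quadForm A v) / (a + b) := by
    field_simp
  rw [quadForm_one_sub_smul, hrewrite, abs_div, abs_of_pos hpos, div_mul_eq_mul_div,
    div_le_div_iff_of_pos_right hpos, abs_le]
  constructor <;> linarith

end QuadForm

section OperatorNorm

variable {ι : Type*} [Fintype ι] [DecidableEq ι]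

lemma norm_toEuclideanCLM_le_of_abs_quadForm_le {M : Matrix ι ι ℝ} (hM : M.IsHermitian)
    {r : ℝ} (hr : 0 ≤ r) (hq : ∀ v, |quadForm M v| ≤ r * ∑ k, v k ^ 2) :
    ‖toEuclideanCLM (𝕜 := ℝ) M‖ ≤ r := by
  have hsymm : (toEuclideanCLM (𝕜 := ℝ) M).IsSymmetric := isSymmetric_toEuclideanLin_iff.mpr hM
  rw [ContinuousLinearMap.norm_eq_iSup_rayleighQuotient _ hsymm]
  refine ciSup_le fun x => ?_
  rw [ContinuousLinearMap.rayleighQuotient, ContinuousLinearMap.reApplyInnerSelf_apply, abs_div,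
    abs_sq]
  refine div_le_of_le_mul₀ (sq_nonneg _) hr ?_
  rw [RCLike.re_to_real, real_inner_comm, inner_toEuclideanCLM, ← quadForm_eq_dotProduct,
    EuclideanSpace.norm_sq_eq]
  simpa only [Real.norm_eq_abs, sq_abs] using hq x.ofLp

open scoped RealInnerProductSpace in
lemma abs_apply_le_norm_toEuclideanCLM (M : Matrix ι ι ℝ) (α β : ι) :
    |M α β| ≤ ‖toEuclideanCLM (𝕜 := ℝ) M‖ := by
  have hentry : M α β = ⟪EuclideanSpace.single α 1, toEuclideanCLM (𝕜 := ℝ) M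
      (EuclideanSpace.single β 1)⟫ := by
    simp [inner_toEuclideanCLM]
  calc |M α β| ≤ ‖EuclideanSpace.single α (1 : ℝ)‖
        * ‖toEuclideanCLM (𝕜 := ℝ) M (EuclideanSpace.single β 1)‖ :=
        hentry ▸ abs_real_inner_le_norm _ _
    _ ≤ ‖EuclideanSpace.single α (1 : ℝ)‖
        * (‖toEuclideanCLM (𝕜 := ℝ) M‖ * ‖EuclideanSpace.single β (1 : ℝ)‖) := by
        gcongr; exact ContinuousLinearMap.le_opNorm _ _
    _ = ‖toEuclideanCLM (𝕜 := ℝ) M‖ := by simp [PiLp.norm_single]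

lemma abs_pow_apply_le_of_abs_quadForm_le {M : Matrix ι ι ℝ} (hM : M.IsHermitian)
    {r : ℝ} (hr : 0 ≤ r) (hq : ∀ v, |quadForm M v| ≤ r * ∑ k, v k ^ 2) (k : ℕ) (α β : ι) :
    |(M ^ k) α β| ≤ r ^ k := by
  have : Nonempty ι := ⟨α⟩
  calc |(M ^ k) α β| ≤ ‖toEuclideanCLM (𝕜 := ℝ) (M ^ k)‖ := abs_apply_le_norm_toEuclideanCLM _ α β
    _ ≤ ‖toEuclideanCLM (𝕜 := ℝ) M‖ ^ k := by rw [map_pow]; exact norm_pow_le _ k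
    _ ≤ r ^ k := by
        gcongr
        exact norm_toEuclideanCLM_le_of_abs_quadForm_le hM hr hq

end OperatorNorm

section Banded

variable {ι : Type*} [Fintype ι] [DecidableEq ι]

lemma pow_apply_eq_zero_of_banded {d : ι → ι → ℕ} (hd_self : ∀ α, d α α = 0)
    (hd_triangle : ∀ α β γ, d α γ ≤ d α β + d β γ) {M : Matrix ι ι ℝ} {L : ℕ}
    (hM : ∀ α β, L < d α β → M α β = 0) (k : ℕ) :
    ∀ α β, k * L < d α β → (M ^ k) α β = 0 := by
  induction k with
  | zero =>
    intro α β h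
    have hne : α ≠ β := by rintro rfl; simp [hd_self] at h
    simp [one_apply_ne hne]
  | succ k ih =>
    intro α β h
    rw [pow_succ', mul_apply]
    refine Finset.sum_eq_zero fun γ _ => ?_
    by_cases hαγ : L < d α γ
    · rw [hM α γ hαγ, zero_mul]
    · rw [ih γ β (by nlinarith [hd_triangle α γ β]), mul_zero]

lemma inv_eq_smul_geom_sum_add {A B : Matrix ι ι ℝ} {c : ℝ} (hA : IsUnit A.det)
    (hB : c • A = 1 - B) (K : ℕ) :
    A⁻¹ = c • ∑ k ∈ Finset.range K, B ^ k + A⁻¹ * B ^ K := by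
  have h : A * (c • ∑ k ∈ Finset.range K, B ^ k) = 1 - B ^ K := by
    rw [Matrix.mul_smul, ← Matrix.smul_mul, hB, mul_neg_geom_sum]
  calc A⁻¹ = A⁻¹ * (A * (c • ∑ k ∈ Finset.range K, B ^ k) + B ^ K) := by
        rw [h, sub_add_cancel, mul_one]
    _ = c • ∑ k ∈ Finset.range K, B ^ k + A⁻¹ * B ^ K := by
        rw [mul_add, ← Matrix.mul_assoc, nonsing_inv_mul A hA, Matrix.one_mul]

lemma abs_pow_apply_le_pow_mul_pow {B : Matrix ι ι ℝ} {r θ : ℝ} {L m : ℕ} {α β : ι}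
    (hr : 0 ≤ r) (hθ0 : 0 ≤ θ) (hθ1 : θ ≤ 1) (hrθ : r ≤ θ ^ (L + 1))
    (hle : ∀ k, |(B ^ k) α β| ≤ r ^ k) (hzero : ∀ k, k * L < m → (B ^ k) α β = 0) (k : ℕ) :
    |(B ^ k) α β| ≤ θ ^ m * θ ^ k := by
  by_cases hk : k * L < m
  · rw [hzero k hk, abs_zero]
    positivity
  · calc |(B ^ k) α β| ≤ r ^ k := hle k
      _ ≤ (θ ^ (L + 1)) ^ k := by gcongr
      _ = θ ^ (k * L) * θ ^ k := by ring
      _ ≤ θ ^ m * θ ^ k := by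
          have := pow_le_pow_of_le_one hθ0 hθ1 (not_lt.mp hk)
          gcongr

lemma abs_inv_apply_le_of_neumann {A B : Matrix ι ι ℝ} {c r θ : ℝ} {L m : ℕ}
    (hA : IsUnit A.det) (hB : c • A = 1 - B) (hc : 0 ≤ c) (hr0 : 0 ≤ r) (hr1 : r < 1)
    (hθ0 : 0 ≤ θ) (hθ1 : θ < 1) (hrθ : r ≤ θ ^ (L + 1))
    (hle : ∀ k γ δ, |(B ^ k) γ δ| ≤ r ^ k) (α β : ι)
    (hzero : ∀ k, k * L < m → (B ^ k) α β = 0) :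
    |A⁻¹ α β| ≤ c * (1 - θ)⁻¹ * θ ^ m := by
  set rowSum := ∑ γ, |A⁻¹ α γ|
  have htrunc : ∀ K : ℕ, |A⁻¹ α β| ≤ c * (1 - θ)⁻¹ * θ ^ m + rowSum * r ^ K := by
    intro K
    have hsplit : A⁻¹ α β = c * ∑ k ∈ Finset.range K, (B ^ k) α β
        + ∑ γ, A⁻¹ α γ * (B ^ K) γ β := by
      conv_lhs => rw [inv_eq_smul_geom_sum_add hA hB K]
      simp [mul_apply, Matrix.sum_apply]
    have hhead : |∑ k ∈ Finset.range K, (B ^ k) α β| ≤ θ ^ m * (1 - θ)⁻¹ :=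
      calc |∑ k ∈ Finset.range K, (B ^ k) α β|
          ≤ ∑ k ∈ Finset.range K, θ ^ m * θ ^ k :=
            (Finset.abs_sum_le_sum_abs _ _).trans <| Finset.sum_le_sum fun k _ =>
              abs_pow_apply_le_pow_mul_pow hr0 hθ0 hθ1.le hrθ (fun k => hle k α β) hzero k
        _ = θ ^ m * ∑ k ∈ Finset.Ico 0 K, θ ^ k := by rw [Finset.mul_sum, Finset.range_eq_Ico]
        _ ≤ θ ^ m * (1 - θ)⁻¹ := by
            gcongr
            simpa using geom_sum_Ico_le_of_lt_one (m := 0) (n := K) hθ0 hθ1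
    have htail : |∑ γ, A⁻¹ α γ * (B ^ K) γ β| ≤ rowSum * r ^ K :=
      calc |∑ γ, A⁻¹ α γ * (B ^ K) γ β| ≤ ∑ γ, |A⁻¹ α γ| * r ^ K :=
            (Finset.abs_sum_le_sum_abs _ _).trans <| Finset.sum_le_sum fun γ _ => by
              rw [abs_mul]; gcongr; exact hle K γ β
        _ = rowSum * r ^ K := by rw [Finset.sum_mul]
    calc |A⁻¹ α β|
          ≤ c * |∑ k ∈ Finset.range K, (B ^ k) α β| + |∑ γ, A⁻¹ α γ * (B ^ K) γ β| := by
          rw [hsplit, ← abs_of_nonneg hc, ← abs_mul, abs_of_nonneg hc]; exact abs_add_le _ _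
      _ ≤ c * (θ ^ m * (1 - θ)⁻¹) + rowSum * r ^ K := by gcongr
      _ = c * (1 - θ)⁻¹ * θ ^ m + rowSum * r ^ K := by ring
  have hlim : Filter.Tendsto (fun K : ℕ => c * (1 - θ)⁻¹ * θ ^ m + rowSum * r ^ K) atTop
      (nhds (c * (1 - θ)⁻¹ * θ ^ m + rowSum * 0)) :=
    tendsto_const_nhds.add ((tendsto_pow_atTop_nhds_zero_of_lt_one hr0 hr1).const_mul _)
  simpa using ge_of_tendsto' hlim htrunc

end Banded

lemma hasSum_pow_natAbs {σ : ℝ} (h0 : 0 ≤ σ) (h1 : σ < 1) :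
    HasSum (fun z : ℤ => σ ^ z.natAbs) ((1 + σ) / (1 - σ)) := by
  have hgeom := hasSum_geometric_of_lt_one h0 h1
  have h := HasSum.of_nat_of_neg_add_one (f := fun z : ℤ => σ ^ z.natAbs)
    (by simpa only [Int.natAbs_natCast] using hgeom)
    (by simpa only [Int.natAbs_neg, ← Nat.cast_succ, Int.natAbs_natCast, pow_succ']
      using hgeom.mul_left σ)
  rwa [← one_add_mul, ← div_eq_mul_inv] at h

lemma sum_pow_natAbs_sub_le {σ : ℝ} (h0 : 0 ≤ σ) (h1 : σ < 1) {N : ℕ} (i : Fin N) :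
    ∑ j : Fin N, σ ^ ((i : ℤ) - j).natAbs ≤ (1 + σ) / (1 - σ) := by
  have hinj : Set.InjOn (fun j : Fin N => (i : ℤ) - j) (Finset.univ : Finset (Fin N)) :=
    fun j _ j' _ h => Fin.ext (by simpa using h)
  rw [← Finset.sum_image (f := fun z : ℤ => σ ^ z.natAbs) hinj]
  exact sum_le_hasSum _ (fun _ _ => by positivity) (hasSum_pow_natAbs h0 h1)

section SupDist

variable {κ : Type*} [Fintype κ] {n : κ → ℕ}

def supDist (α β : (ℓ : κ) → Fin (n ℓ)) : ℕ :=
  Finset.univ.sup fun ℓ => ((α ℓ : ℤ) - (β ℓ : ℤ)).natAbs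

lemma natAbs_sub_le_supDist (α β : (ℓ : κ) → Fin (n ℓ)) (ℓ : κ) :
    ((α ℓ : ℤ) - (β ℓ : ℤ)).natAbs ≤ supDist α β :=
  Finset.le_sup (f := fun ℓ => ((α ℓ : ℤ) - (β ℓ : ℤ)).natAbs) (Finset.mem_univ ℓ)

lemma supDist_self (α : (ℓ : κ) → Fin (n ℓ)) : supDist α α = 0 := by
  simp [supDist]

lemma supDist_triangle (α β γ : (ℓ : κ) → Fin (n ℓ)) :
    supDist α γ ≤ supDist α β + supDist β γ :=
  Finset.sup_le fun ℓ _ => by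
    have := natAbs_sub_le_supDist α β ℓ
    have := natAbs_sub_le_supDist β γ ℓ
    omega

lemma sum_pow_supDist_le [DecidableEq κ] {θ σ : ℝ} (hθ : 0 ≤ θ) (hσ0 : 0 ≤ σ) (hσ1 : σ < 1)
    (hθσ : θ ≤ σ ^ Fintype.card κ) (α : (ℓ : κ) → Fin (n ℓ)) :
    ∑ β, θ ^ supDist α β ≤ ((1 + σ) / (1 - σ)) ^ Fintype.card κ := by
  calc ∑ β, θ ^ supDist α β
        ≤ ∑ β : (ℓ : κ) → Fin (n ℓ), ∏ ℓ, σ ^ ((α ℓ : ℤ) - (β ℓ : ℤ)).natAbs :=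
        Finset.sum_le_sum fun β _ => by
          rw [Finset.prod_pow_eq_pow_sum]
          calc θ ^ supDist α β ≤ (σ ^ Fintype.card κ) ^ supDist α β := by gcongr
            _ = σ ^ (Fintype.card κ • supDist α β) := by rw [← pow_mul, smul_eq_mul]
            _ ≤ σ ^ ∑ ℓ, ((α ℓ : ℤ) - (β ℓ : ℤ)).natAbs :=
                pow_le_pow_of_le_one hσ0 hσ1.le <| Finset.sum_le_card_nsmul _ _ _
                  fun ℓ _ => natAbs_sub_le_supDist α β ℓ
    _ = ∏ ℓ, ∑ j : Fin (n ℓ), σ ^ ((α ℓ : ℤ) - (j : ℤ)).natAbs :=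
        (Fintype.prod_sum fun ℓ (j : Fin (n ℓ)) => σ ^ ((α ℓ : ℤ) - (j : ℤ)).natAbs).symm
    _ ≤ ∏ _ℓ : κ, (1 + σ) / (1 - σ) :=
        Finset.prod_le_prod (fun _ _ => Finset.sum_nonneg fun _ _ => by positivity)
          fun ℓ _ => sum_pow_natAbs_sub_le hσ0 hσ1 (α ℓ)
    _ = ((1 + σ) / (1 - σ)) ^ Fintype.card κ := Finset.prod_const _

end SupDist

lemma exists_pos_lt_one_le_pow {r : ℝ} (hr : r < 1) (m : ℕ) :
    ∃ θ : ℝ, 0 < θ ∧ θ < 1 ∧ r ≤ θ ^ m := by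
  set s := max r 2⁻¹
  have hs0 : 0 < s := lt_max_of_lt_right (by norm_num)
  have hs1 : s < 1 := max_lt hr (by norm_num)
  refine ⟨s ^ ((m + 1 : ℕ) : ℝ)⁻¹, Real.rpow_pos_of_pos hs0 _,
    Real.rpow_lt_one hs0.le hs1 (by positivity), ?_⟩
  calc r ≤ s := le_max_left _ _
    _ = (s ^ ((m + 1 : ℕ) : ℝ)⁻¹) ^ (m + 1) :=
        (Real.rpow_inv_natCast_pow hs0.le m.succ_ne_zero).symm
    _ ≤ (s ^ ((m + 1 : ℕ) : ℝ)⁻¹) ^ m :=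
        pow_le_pow_of_le_one (by positivity) (Real.rpow_le_one hs0.le hs1.le (by positivity))
          m.le_succ

theorem statement4_general (D L : ℕ)
    (a b : ℝ) (ha : 0 < a) (hab : a ≤ b) :
    ∃ C θ C' : ℝ, 0 < C ∧ 0 < θ ∧ θ < 1 ∧ 0 < C' ∧
      ∀ (nn : Fin D → ℕ), (∀ ℓ, 1 ≤ nn ℓ) →
      ∀ A : Matrix ((ℓ : Fin D) → Fin (nn ℓ)) ((ℓ : Fin D) → Fin (nn ℓ)) ℝ,
        A.IsSymm →
        (∀ α β : (ℓ : Fin D) → Fin (nn ℓ),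
          L < Finset.univ.sup (fun ℓ => ((α ℓ : ℤ) - (β ℓ : ℤ)).natAbs) →
            A α β = 0) →
        (∀ v : ((ℓ : Fin D) → Fin (nn ℓ)) → ℝ,
          a * (∑ k, v k ^ 2) ≤ quadForm A v ∧ quadForm A v ≤ b * (∑ k, v k ^ 2)) →
        IsUnit A.det ∧
        (∀ α β : (ℓ : Fin D) → Fin (nn ℓ),
          |A⁻¹ α β| ≤
            C * θ ^ (Finset.univ.sup (fun ℓ => ((α ℓ : ℤ) - (β ℓ : ℤ)).natAbs))) ∧
        (∀ α, ∑ β, |A⁻¹ α β| ≤ C') := by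
  have hsum : 0 < a + b := by linarith
  have hr0 : 0 ≤ (b - a) / (a + b) := div_nonneg (by linarith) hsum.le
  have hr1 : (b - a) / (a + b) < 1 := (div_lt_one hsum).mpr (by linarith)
  obtain ⟨θ, hθ0, hθ1, hrθ⟩ := exists_pos_lt_one_le_pow hr1 (L + 1)
  obtain ⟨σ, hσ0, hσ1, hθσ⟩ := exists_pos_lt_one_le_pow hθ1 D
  have hθgap : 0 < 1 - θ := by linarith
  have hσgap : 0 < 1 - σ := by linarith
  set C := 2 / (a + b) * (1 - θ)⁻¹
  refine ⟨C, θ, C * ((1 + σ) / (1 - σ)) ^ D, by positivity, hθ0, hθ1, by positivity, ?_⟩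
  intro nn _ A hsymm hband hquad
  have hdet := isUnit_det_of_le_quadForm ha fun v => (hquad v).1
  set B := 1 - (2 / (a + b)) • A with hB
  have hBherm : B.IsHermitian := isHermitian_iff_isSymm.mpr (isSymm_one.sub (hsymm.smul _))
  have hBband : ∀ α β, L < supDist α β → B α β = 0 := fun α β h => by
    have hne : α ≠ β := by rintro rfl; simp [supDist_self] at h
    simp [hB, one_apply_ne hne, hband α β h]
  have hdecay : ∀ α β, |A⁻¹ α β| ≤ C * θ ^ supDist α β := fun α β =>
    abs_inv_apply_le_of_neumann hdet (sub_sub_cancel 1 _).symm (by positivity) hr0 hr1 hθ0.le hθ1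
      hrθ (abs_pow_apply_le_of_abs_quadForm_le hBherm hr0
        (abs_quadForm_one_sub_smul_le ha hab hquad)) α β (pow_apply_eq_zero_of_banded supDist_self supDist_triangle hBband · α β)
  refine ⟨hdet, hdecay, fun α => ?_⟩
  calc ∑ β, |A⁻¹ α β| ≤ ∑ β, C * θ ^ supDist α β := Finset.sum_le_sum fun β _ => hdecay α β
    _ ≤ C * ((1 + σ) / (1 - σ)) ^ D := by
      rw [← Finset.mul_sum]
      gcongr
      simpa using sum_pow_supDist_le hθ0.le hσ0.le hσ1 (by simpa using hθσ) α

/-- multi-layer block-banded extension of the exponential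
inverse-decay bound, as in the proof of Lemma SA-1.
If `A` is symmetric, indexed by the product set `I = Π_ℓ {1,…,n_ℓ}`, vanishes when
`max_ℓ |α_ℓ − β_ℓ| > L`, and satisfies `a‖v‖² ≤ v'Av ≤ b‖v‖²`, then `A` is
invertible and `|(A⁻¹)_{αβ}| ≤ C θ^{max_ℓ|α_ℓ−β_ℓ|}` with `C, θ, C'` depending
only on `a`, `b`, `L`, `D`; consequently the maximal absolute row sum of `A⁻¹`
is at most `C'`. -/
theorem statement4 (D L : ℕ) (hD : 1 ≤ D) (hL : 1 ≤ L)
    (a b : ℝ) (ha : 0 < a) (hab : a ≤ b) :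
    ∃ C θ C' : ℝ, 0 < C ∧ 0 < θ ∧ θ < 1 ∧ 0 < C' ∧
      ∀ (nn : Fin D → ℕ), (∀ ℓ, 1 ≤ nn ℓ) →
      ∀ A : Matrix ((ℓ : Fin D) → Fin (nn ℓ)) ((ℓ : Fin D) → Fin (nn ℓ)) ℝ,
        A.IsSymm →
        (∀ α β : (ℓ : Fin D) → Fin (nn ℓ),
          L < Finset.univ.sup (fun ℓ => ((α ℓ : ℤ) - (β ℓ : ℤ)).natAbs) →
            A α β = 0) →
        (∀ v : ((ℓ : Fin D) → Fin (nn ℓ)) → ℝ,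
          a * (∑ k, v k ^ 2) ≤ quadForm A v ∧ quadForm A v ≤ b * (∑ k, v k ^ 2)) →
        IsUnit A.det ∧
        (∀ α β : (ℓ : Fin D) → Fin (nn ℓ),
          |A⁻¹ α β| ≤
            C * θ ^ (Finset.univ.sup (fun ℓ => ((α ℓ : ℤ) - (β ℓ : ℤ)).natAbs))) ∧
        (∀ α, ∑ β, |A⁻¹ α β| ≤ C') :=
  statement4_general D L a b ha hab
end
end

section
/- Under the setup below, there exist constants 0 < c ≤ C, depending only on the constants in the assumptions, such that c·h^{−d−2[q]} ≤ inf_{x∈𝒳} Ω₀(x) ≤ sup_{x∈𝒳} Ω₀(x) ≤ C·h^{−d−2[q]}, where Ω₀(x) := γ_q(x)'Σ₀γ_q(x), γ_q(x)' := ∂^qp(x)'Q^{−1}, Q := ∫_𝒳 p(x)p(x)'f(x)dx and Σ₀ := ∫_𝒳 p(x)p(x)'σ²(x)f(x)dx. (Lemma SA-4 for the uncorrected estimator, j = 0: two-sided bound on the asymptotic variance function.) -/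
/-!
Write `Q[a] = ∫ (a'p)² f` for the quadratic form of `Q`. Locality of the basis makes `Q[a]`
comparable to `h^d ‖a‖²`. From below, sum assumption (b) over `k`: a point meets at most `Mb` of
the supports `H_k`, because every `k` with `x ∈ H_k` is active on the cell containing `x`. From
above, split the integral over the cells, which have null boundaries (they are convex) and volume
`≲ h^d`; on a cell only the basis functions active there contribute, `‖p‖ ≤ c₂`, and each basis
function is active on at most `Mb` cells. Hence `v'Q⁻¹v` is comparable to `h^{-d}‖v‖²`, by
expanding `0 ≤ Q[Q⁻¹v - v/β]` from below and by Cauchy–Schwarz from above. Finally `Σ₀` is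
comparable to `Q` because `σ²` is bounded above and below, and `‖∂^q p(x)‖ ≍ h^{-[q]}`.
-/

open MeasureTheory Filter Metric Matrix
open scoped BigOperators ENNReal

noncomputable section

namespace IsOpenPolyhedron

variable {d : ℕ} {s : Set (Euc d)}

lemma eq_iInter (hs : IsOpenPolyhedron s) :
    ∃ (N : ℕ) (a : Fin N → Euc d) (b : Fin N → ℝ),
      s = ⋂ i, {x | (inner ℝ (a i) x : ℝ) < b i} := by
  obtain ⟨N, a, b, rfl⟩ := hs
  exact ⟨N, a, b, Set.ofPred_forall _⟩

lemma convex (hs : IsOpenPolyhedron s) : Convex ℝ s := by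
  obtain ⟨N, a, b, rfl⟩ := hs.eq_iInter
  exact convex_iInter fun i => convex_halfSpace_lt (innerₛₗ ℝ (a i)).isLinear (b i)

lemma isOpen (hs : IsOpenPolyhedron s) : IsOpen s := by
  obtain ⟨N, a, b, rfl⟩ := hs.eq_iInter
  exact isOpen_iInter_of_finite fun i =>
    isOpen_lt (continuous_const.inner continuous_id) continuous_const

lemma volume_closure_diff (hs : IsOpenPolyhedron s) : volume (closure s \ s) = 0 := by
  rw [← hs.isOpen.frontier_eq]
  exact hs.convex.addHaar_frontier volume

end IsOpenPolyhedron

lemma ae_eq_biUnion_of_closure_cover {d : ℕ} {𝒳 : Set (Euc d)} {Δ : Finset (Set (Euc d))}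
    (hpoly : ∀ δ ∈ Δ, IsOpenPolyhedron δ) (hsub : ∀ δ ∈ Δ, δ ⊆ 𝒳)
    (hcover : (⋃ δ ∈ Δ, closure δ) = 𝒳) :
    𝒳 =ᵐ[volume] ⋃ δ ∈ Δ, δ := by
  refine ae_eq_set.2 ⟨measure_mono_null ?_ ((measure_biUnion_null_iff Δ.countable_toSet).2
    fun δ hδ => (hpoly δ hδ).volume_closure_diff),
    by rw [Set.sdiff_eq_empty.2 (Set.iUnion₂_subset hsub), measure_empty]⟩
  rintro x ⟨hx𝒳, hx⟩
  obtain ⟨δ, hδ, hxδ⟩ := Set.mem_iUnion₂.1 (hcover.symm ▸ hx𝒳)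
  exact Set.mem_iUnion₂.2 ⟨δ, hδ, hxδ, fun h => hx (Set.mem_iUnion₂.2 ⟨δ, hδ, h⟩)⟩

lemma volume_le_of_diam_le {d : ℕ} {s : Set (Euc d)} (hs : Bornology.IsBounded s) {h : ℝ}
    (hh : 0 ≤ h) (hdiam : diam s ≤ h) :
    volume s ≤ ENNReal.ofReal (volume.real (ball (0 : Euc d) 1) * h ^ d) := by
  rcases s.eq_empty_or_nonempty with rfl | ⟨y, hy⟩
  · simp only [measure_empty, zero_le]
  calc volume s ≤ volume (closedBall y h) :=
        measure_mono fun x hx => mem_closedBall.2 ((dist_le_diam_of_mem hs hx hy).trans hdiam)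
    _ = ENNReal.ofReal (volume.real (ball (0 : Euc d) 1) * h ^ d) := by
        rw [Measure.addHaar_closedBall _ _ hh, finrank_euclideanSpace_fin, mul_comm,
          ENNReal.ofReal_mul measureReal_nonneg, ofReal_measureReal measure_ball_lt_top.ne]

lemma sum_sum_filter_le_mul {α ι : Type*} [Fintype ι] (Δ : Finset α) (P : α → ι → Prop)
    [∀ δ j, Decidable (P δ j)] {M : ℕ} (hM : ∀ j, (Δ.filter (P · j)).card ≤ M)
    {a : ι → ℝ} (ha : ∀ j, 0 ≤ a j) :
    ∑ δ ∈ Δ, ∑ j ∈ Finset.univ.filter (P δ), a j ≤ M * ∑ j, a j := by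
  simp_rw [Finset.sum_filter]
  rw [Finset.sum_comm, Finset.mul_sum]
  refine Finset.sum_le_sum fun j _ => ?_
  rw [← Finset.sum_filter, Finset.sum_const, nsmul_eq_mul]
  exact mul_le_mul_of_nonneg_right (by exact_mod_cast hM j) (ha j)

lemma sq_sum_mul_le_of_support {ι : Type*} [Fintype ι] (S : Finset ι) {a b : ι → ℝ}
    (hb : ∀ j ∉ S, b j = 0) :
    (∑ j, a j * b j) ^ 2 ≤ (∑ j ∈ S, a j ^ 2) * ∑ j, b j ^ 2 := by
  rw [← Finset.sum_subset (Finset.subset_univ S) fun j _ hj => by rw [hb j hj, mul_zero]]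
  exact (Finset.sum_mul_sq_le_sq_mul_sq S a b).trans
    (mul_le_mul_of_nonneg_left (Finset.sum_le_univ_sum_of_nonneg fun j => sq_nonneg _)
      (Finset.sum_nonneg fun j _ => sq_nonneg _))

lemma quadForm_eq_dotProduct_mulVec {ι : Type*} [Fintype ι] (A : Matrix ι ι ℝ) (v : ι → ℝ) :
    quadForm A v = v ⬝ᵥ A *ᵥ v := by
  simp only [quadForm, dotProduct, mulVec, Finset.mul_sum, mul_assoc]

section InverseBounds

variable {ι : Type*} [Fintype ι] [DecidableEq ι] {A : Matrix ι ι ℝ} {α β : ℝ}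

lemma isUnit_det_of_quadForm_ge (hα : 0 < α) (hlow : ∀ a, α * ∑ k, a k ^ 2 ≤ quadForm A a) :
    IsUnit A.det := by
  refine isUnit_iff_ne_zero.2 fun h0 => ?_
  obtain ⟨a, ha, hAa⟩ := exists_mulVec_eq_zero_iff.2 h0
  have hsum : ∑ k, a k ^ 2 ≤ 0 := by
    have := hlow a
    rw [quadForm_eq_dotProduct_mulVec, hAa, dotProduct_zero] at this
    exact nonpos_of_mul_nonpos_right this hα
  have hsq := (Fintype.sum_eq_zero_iff_of_nonneg fun k => sq_nonneg (a k)).1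
    (hsum.antisymm (by positivity))
  exact ha (funext fun k => pow_eq_zero_iff two_ne_zero |>.1 (congrFun hsq k))

lemma quadForm_inv_mulVec_bounds (hA : A.IsSymm) (hα : 0 < α) (hβ : 0 < β)
    (hlow : ∀ a, α * ∑ k, a k ^ 2 ≤ quadForm A a)
    (hup : ∀ a, quadForm A a ≤ β * ∑ k, a k ^ 2) (v : ι → ℝ) :
    (∑ k, v k ^ 2) / β ≤ quadForm A (A⁻¹ *ᵥ v) ∧
      quadForm A (A⁻¹ *ᵥ v) ≤ (∑ k, v k ^ 2) / α := by
  set w := A⁻¹ *ᵥ v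
  have hAw : A *ᵥ w = v := by
    rw [mulVec_mulVec, mul_nonsing_inv _ (isUnit_det_of_quadForm_ge hα hlow), one_mulVec]
  have hwA : w ᵥ* A = v := by rw [← mulVec_transpose, hA.eq, hAw]
  have hQw : quadForm A w = w ⬝ᵥ v := by rw [quadForm_eq_dotProduct_mulVec, hAw]
  have hvv : v ⬝ᵥ v = ∑ k, v k ^ 2 := by simp only [dotProduct, sq]
  set t := ∑ k, v k ^ 2
  rw [hQw]
  constructor
  · have hexp : quadForm A (w - β⁻¹ • v) = w ⬝ᵥ v - 2 * β⁻¹ * t + β⁻¹ ^ 2 * quadForm A v := by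
      simp only [quadForm_eq_dotProduct_mulVec, mulVec_sub, mulVec_smul, hAw, sub_dotProduct,
        dotProduct_sub, smul_dotProduct, dotProduct_smul, dotProduct_mulVec w, hwA, hvv,
        smul_eq_mul]
      ring
    have hpos : 0 ≤ quadForm A (w - β⁻¹ • v) := (by positivity : 0 ≤ α * _).trans (hlow _)
    have hβv : β⁻¹ ^ 2 * quadForm A v ≤ β⁻¹ * t :=
      calc β⁻¹ ^ 2 * quadForm A v ≤ β⁻¹ ^ 2 * (β * t) := by gcongr; exact hup v
        _ = β⁻¹ * t := by field_simp
    rw [div_eq_mul_inv]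
    linarith
  · have hαq : α * (w ⬝ᵥ v) ^ 2 ≤ (w ⬝ᵥ v) * t :=
      calc α * (w ⬝ᵥ v) ^ 2 ≤ α * ((∑ k, w k ^ 2) * t) := by
            gcongr; exact Finset.sum_mul_sq_le_sq_mul_sq _ _ _
        _ = (α * ∑ k, w k ^ 2) * t := by ring
        _ ≤ (w ⬝ᵥ v) * t := by gcongr; exact hQw ▸ hlow w
    have ht : 0 ≤ t := by positivity
    rw [le_div_iff₀ hα]
    rcases le_or_gt (w ⬝ᵥ v) 0 with hq | hq
    · nlinarith
    · nlinarith

end InverseBounds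

def gramMatrix {X ι : Type*} [MeasurableSpace X] (μ : Measure X) (p : X → ι → ℝ) (g : X → ℝ) :
    Matrix ι ι ℝ :=
  fun k l => ∫ x, p x k * p x l * g x ∂μ

section Gram

variable {X ι : Type*} [MeasurableSpace X] {μ : Measure X} {p : X → ι → ℝ} {g : X → ℝ}

lemma gramMatrix_isSymm : (gramMatrix μ p g).IsSymm := by
  ext k l
  simp only [transpose_apply, gramMatrix, mul_comm (p _ k) (p _ l)]

lemma integrableOn_gram_entry {s : Set X} (hs : MeasurableSet s) (hμs : μ s < ⊤)
    (hp : ∀ k, Measurable fun x => p x k) (hg : Measurable g) {B G : ℝ}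
    (hpB : ∀ x ∈ s, ∀ k, |p x k| ≤ B) (hgG : ∀ x ∈ s, |g x| ≤ G) (k l : ι) :
    IntegrableOn (fun x => p x k * p x l * g x) s μ := by
  refine IntegrableOn.of_bound hμs (((hp k).mul (hp l)).mul hg).aestronglyMeasurable (B * B * G)
    ((ae_restrict_iff' hs).2 (ae_of_all _ fun x hx => ?_))
  rw [Real.norm_eq_abs, abs_mul, abs_mul]
  have hB : 0 ≤ B := (abs_nonneg _).trans (hpB x hx k)
  exact mul_le_mul (mul_le_mul (hpB x hx k) (hpB x hx l) (abs_nonneg _) hB) (hgG x hx)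
    (abs_nonneg _) (mul_nonneg hB hB)

variable [Fintype ι]

lemma sq_sum_mul_eq_sum_sum (a b : ι → ℝ) (c : ℝ) :
    (∑ j, a j * b j) ^ 2 * c = ∑ k, ∑ l, a k * (b k * b l * c) * a l := by
  rw [sq, Finset.sum_mul_sum, Finset.sum_mul]
  refine Finset.sum_congr rfl fun k _ => ?_
  rw [Finset.sum_mul]
  exact Finset.sum_congr rfl fun l _ => by ring

lemma integrable_sq_sum_mul (hint : ∀ k l, Integrable (fun x => p x k * p x l * g x) μ)
    (a : ι → ℝ) : Integrable (fun x => (∑ j, a j * p x j) ^ 2 * g x) μ := by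
  simp_rw [sq_sum_mul_eq_sum_sum]
  exact integrable_finsetSum _ fun k _ => integrable_finsetSum _ fun l _ =>
    ((hint k l).const_mul (a k)).mul_const (a l)

lemma quadForm_gramMatrix (hint : ∀ k l, Integrable (fun x => p x k * p x l * g x) μ)
    (a : ι → ℝ) : quadForm (gramMatrix μ p g) a = ∫ x, (∑ j, a j * p x j) ^ 2 * g x ∂μ := by
  simp_rw [sq_sum_mul_eq_sum_sum]
  rw [integral_finsetSum _ fun k _ => integrable_finsetSum _ fun l _ =>
    ((hint k l).const_mul (a k)).mul_const (a l)]
  refine Finset.sum_congr rfl fun k _ => ?_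
  rw [integral_finsetSum _ fun l _ => ((hint k l).const_mul (a k)).mul_const (a l)]
  refine Finset.sum_congr rfl fun l _ => ?_
  rw [integral_mul_const, integral_const_mul, gramMatrix]

lemma mul_quadForm_gramMatrix_le {g' : X → ℝ} {c : ℝ}
    (hint : ∀ k l, Integrable (fun x => p x k * p x l * g x) μ)
    (hint' : ∀ k l, Integrable (fun x => p x k * p x l * g' x) μ)
    (hg : ∀ᵐ x ∂μ, c * g x ≤ g' x) (a : ι → ℝ) :
    c * quadForm (gramMatrix μ p g) a ≤ quadForm (gramMatrix μ p g') a := by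
  rw [quadForm_gramMatrix hint, quadForm_gramMatrix hint', ← integral_const_mul]
  refine integral_mono_ae ((integrable_sq_sum_mul hint a).const_mul c)
    (integrable_sq_sum_mul hint' a) (hg.mono fun x hx => ?_)
  simp only [mul_left_comm c]
  exact mul_le_mul_of_nonneg_left hx (sq_nonneg _)

lemma quadForm_gramMatrix_le_mul {g' : X → ℝ} {c : ℝ}
    (hint : ∀ k l, Integrable (fun x => p x k * p x l * g x) μ)
    (hint' : ∀ k l, Integrable (fun x => p x k * p x l * g' x) μ)
    (hg : ∀ᵐ x ∂μ, g' x ≤ c * g x) (a : ι → ℝ) :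
    quadForm (gramMatrix μ p g') a ≤ c * quadForm (gramMatrix μ p g) a := by
  rw [quadForm_gramMatrix hint, quadForm_gramMatrix hint', ← integral_const_mul]
  refine integral_mono_ae (integrable_sq_sum_mul hint' a)
    ((integrable_sq_sum_mul hint a).const_mul c) (hg.mono fun x hx => ?_)
  simp only [mul_left_comm c]
  exact mul_le_mul_of_nonneg_left hx (sq_nonneg _)

lemma quadForm_gramMatrix_mul_bounds {s : Set X} {σ : X → ℝ} {B G σ₁ σ₂ : ℝ}
    (hs : MeasurableSet s) (hμs : μ s < ⊤) (hpm : ∀ k, Measurable fun x => p x k)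
    (hgm : Measurable g) (hσm : Measurable σ) (hpB : ∀ x ∈ s, ∀ k, |p x k| ≤ B)
    (hg : ∀ x ∈ s, 0 ≤ g x ∧ g x ≤ G) (hσ : ∀ x ∈ s, σ₁ ≤ σ x ∧ σ x ≤ σ₂) (a : ι → ℝ) :
    σ₁ * quadForm (gramMatrix (μ.restrict s) p g) a ≤
        quadForm (gramMatrix (μ.restrict s) p fun x => σ x * g x) a ∧
      quadForm (gramMatrix (μ.restrict s) p fun x => σ x * g x) a ≤
        σ₂ * quadForm (gramMatrix (μ.restrict s) p g) a := by
  have habs : ∀ x ∈ s, |g x| ≤ G := fun x hx => abs_le.2 ⟨by linarith [hg x hx], (hg x hx).2⟩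
  have hint := integrableOn_gram_entry hs hμs hpm hgm hpB habs
  have hintσ := integrableOn_gram_entry (g := fun x => σ x * g x) hs hμs hpm (hσm.mul hgm) hpB
    fun x hx => (abs_mul (σ x) (g x)).trans_le (mul_le_mul
      (abs_le_max_abs_abs (hσ x hx).1 (hσ x hx).2) (habs x hx) (abs_nonneg _) (by positivity))
  have hae : ∀ᵐ x ∂μ.restrict s, (σ₁ ≤ σ x ∧ σ x ≤ σ₂) ∧ 0 ≤ g x :=
    ae_restrict_of_forall_mem hs fun x hx => ⟨hσ x hx, (hg x hx).1⟩
  exact ⟨mul_quadForm_gramMatrix_le hint hintσ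
      (hae.mono fun x hx => mul_le_mul_of_nonneg_right hx.1.1 hx.2) a,
    quadForm_gramMatrix_le_mul hint hintσ
      (hae.mono fun x hx => mul_le_mul_of_nonneg_right hx.1.2 hx.2) a⟩

end Gram

-- `⋃₀ activeCells Δ p k` is the set `H_k` of the local basis assumption (a).
def activeCells {X ι : Type*} (Δ : Finset (Set X)) (p : X → ι → ℝ) (k : ι) : Set (Set X) :=
  {δ | δ ∈ Δ ∧ ¬ ∀ x ∈ δ, p x k = 0}

section LocalBasis

variable {X ι : Type*} {Δ : Finset (Set X)} {p : X → ι → ℝ} {M : ℕ}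

lemma ncard_activeCells_eq_card_filter [DecidableEq (Set X)] (k : ι)
    [DecidablePred fun δ : Set X => ¬ ∀ x ∈ δ, p x k = 0] :
    (activeCells Δ p k).ncard = (Δ.filter fun δ => ¬ ∀ x ∈ δ, p x k = 0).card := by
  rw [← Set.ncard_coe_finset, Finset.coe_filter]
  rfl

lemma ncard_mem_sUnion_activeCells_le [Finite ι]
    (hdisj : ∀ δ ∈ Δ, ∀ δ' ∈ Δ, δ ≠ δ' → Disjoint δ δ')
    (hM : ∀ k, {k' | ¬ ∀ x ∈ ⋃₀ activeCells Δ p k, p x k' = 0}.ncard ≤ M) (x : X) :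
    {k | x ∈ ⋃₀ activeCells Δ p k}.ncard ≤ M := by
  rcases Set.eq_empty_or_nonempty {k | x ∈ ⋃₀ activeCells Δ p k} with h | ⟨k₀, δ₀, hδ₀, hxδ₀⟩
  · rw [h, Set.ncard_empty]
    exact Nat.zero_le M
  refine (Set.ncard_le_ncard (fun k ⟨δ, hδ, hxδ⟩ hk => hδ.2 fun y hy => ?_)
    (Set.toFinite _)).trans (hM k₀)
  obtain rfl : δ = δ₀ :=
    by_contra fun hne => Set.disjoint_left.1 (hdisj _ hδ.1 _ hδ₀.1 hne) hxδ hxδ₀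
  exact hk y ⟨δ, hδ₀, hy⟩

lemma sum_indicator_eq_ncard_mul [Fintype ι] (H : ι → Set X) (F : X → ℝ) (x : X) :
    ∑ k, (H k).indicator F x = {k | x ∈ H k}.ncard * F x := by
  classical
  simp only [Set.indicator_apply]
  rw [← Finset.sum_filter, Finset.sum_const, nsmul_eq_mul, ← Set.ncard_coe_finset,
    Finset.coe_filter]
  simp

variable [MeasurableSpace X] {μ : Measure X} {s : Set X}

lemma measurableSet_sUnion_activeCells (hΔ : ∀ δ ∈ Δ, MeasurableSet δ) (k : ι) :
    MeasurableSet (⋃₀ activeCells Δ p k) :=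
  .sUnion (Δ.finite_toSet.subset fun _ hδ => hδ.1).countable fun δ hδ => hΔ δ hδ.1

lemma sum_setIntegral_le_mul_setIntegral [Fintype ι] {H : ι → Set X} {F : X → ℝ}
    (hH : ∀ k, MeasurableSet (H k)) (hs : MeasurableSet s) (hHs : ∀ k, H k ⊆ s)
    (hF : ∀ x, 0 ≤ F x) (hFs : IntegrableOn F s μ) (hM : ∀ x, {k | x ∈ H k}.ncard ≤ M) :
    ∑ k, ∫ x in H k, F x ∂μ ≤ M * ∫ x in s, F x ∂μ := by
  have hHi : ∀ k, Integrable ((H k).indicator F) μ :=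
    fun k => (hFs.mono_set (hHs k)).integrable_indicator (hH k)
  simp_rw [← integral_indicator (hH _)]
  rw [← integral_finsetSum _ fun k _ => hHi k, ← integral_indicator hs, ← integral_const_mul]
  refine integral_mono (integrable_finsetSum _ fun k _ => hHi k)
    ((hFs.integrable_indicator hs).const_mul _) fun x => ?_
  simp only [sum_indicator_eq_ncard_mul]
  by_cases hx : x ∈ s
  · rw [Set.indicator_of_mem hx]
    exact mul_le_mul_of_nonneg_right (by exact_mod_cast hM x) (hF x)
  · have : {k | x ∈ H k} = ∅ := Set.eq_empty_of_forall_notMem fun k hk => hx (hHs k hk)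
    rw [this, Set.ncard_empty, Set.indicator_of_notMem hx]
    simp

lemma mul_sum_sq_le_setIntegral [Fintype ι] {c : ℝ} (hs : MeasurableSet s)
    (hΔ : ∀ δ ∈ Δ, MeasurableSet δ) (hsub : ∀ δ ∈ Δ, δ ⊆ s)
    (hdisj : ∀ δ ∈ Δ, ∀ δ' ∈ Δ, δ ≠ δ' → Disjoint δ δ')
    (hM : ∀ k, {k' | ¬ ∀ x ∈ ⋃₀ activeCells Δ p k, p x k' = 0}.ncard ≤ M)
    (hloc : ∀ k (a : ι → ℝ),
      c * a k ^ 2 ≤ ∫ x in ⋃₀ activeCells Δ p k, (∑ j, a j * p x j) ^ 2 ∂μ)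
    {a : ι → ℝ} (ha : IntegrableOn (fun x => (∑ j, a j * p x j) ^ 2) s μ) :
    c * ∑ k, a k ^ 2 ≤ M * ∫ x in s, (∑ j, a j * p x j) ^ 2 ∂μ := by
  rw [Finset.mul_sum]
  exact (Finset.sum_le_sum fun k _ => hloc k a).trans
    (sum_setIntegral_le_mul_setIntegral (measurableSet_sUnion_activeCells hΔ) hs
      (fun k => Set.sUnion_subset fun δ hδ => hsub δ hδ.1) (fun x => sq_nonneg _) ha
      (ncard_mem_sUnion_activeCells_le hdisj hM))

lemma setIntegral_sq_le_of_cells [Fintype ι] {B V : ℝ} (hB : 0 ≤ B) (hV : 0 ≤ V)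
    (hΔ : ∀ δ ∈ Δ, MeasurableSet δ) (hsub : ∀ δ ∈ Δ, δ ⊆ s)
    (hdisj : ∀ δ ∈ Δ, ∀ δ' ∈ Δ, δ ≠ δ' → Disjoint δ δ') (hae : s =ᵐ[μ] ⋃ δ ∈ Δ, δ)
    (hvol : ∀ δ ∈ Δ, μ δ ≤ ENNReal.ofReal V) (hcells : ∀ k, (activeCells Δ p k).ncard ≤ M)
    (hpB : ∀ δ ∈ Δ, ∀ x ∈ δ, ∑ j, p x j ^ 2 ≤ B)
    {a : ι → ℝ} (ha : IntegrableOn (fun x => (∑ j, a j * p x j) ^ 2) s μ) :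
    ∫ x in s, (∑ j, a j * p x j) ^ 2 ∂μ ≤ M * B * V * ∑ j, a j ^ 2 := by
  classical
  set A : Set X → Finset ι := fun δ => Finset.univ.filter fun j => ¬ ∀ x ∈ δ, p x j = 0
  have hcell : ∀ δ ∈ Δ, ∫ x in δ, (∑ j, a j * p x j) ^ 2 ∂μ ≤ V * B * ∑ j ∈ A δ, a j ^ 2 := by
    intro δ hδ
    have hpt : ∀ x ∈ δ, (∑ j, a j * p x j) ^ 2 ≤ B * ∑ j ∈ A δ, a j ^ 2 := by
      intro x hx
      have hsupp : ∀ j ∉ A δ, p x j = 0 := fun j hj => by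
        simp only [A, Finset.mem_filter, Finset.mem_univ, true_and, not_not] at hj
        exact hj x hx
      calc (∑ j, a j * p x j) ^ 2 ≤ (∑ j ∈ A δ, a j ^ 2) * ∑ j, p x j ^ 2 :=
            sq_sum_mul_le_of_support _ hsupp
        _ ≤ B * ∑ j ∈ A δ, a j ^ 2 := by rw [mul_comm]; gcongr; exact hpB δ hδ x hx
    have hfin : μ δ ≠ ⊤ := ne_top_of_le_ne_top ENNReal.ofReal_ne_top (hvol δ hδ)
    calc ∫ x in δ, (∑ j, a j * p x j) ^ 2 ∂μ ≤ ∫ _ in δ, B * ∑ j ∈ A δ, a j ^ 2 ∂μ :=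
          setIntegral_mono_on (ha.mono_set (hsub δ hδ)) (integrableOn_const hfin) (hΔ δ hδ) hpt
      _ = μ.real δ * (B * ∑ j ∈ A δ, a j ^ 2) := by rw [setIntegral_const, smul_eq_mul]
      _ ≤ V * (B * ∑ j ∈ A δ, a j ^ 2) := by
          gcongr
          exact ENNReal.toReal_le_of_le_ofReal hV (hvol δ hδ)
      _ = V * B * ∑ j ∈ A δ, a j ^ 2 := by ring
  rw [setIntegral_congr_set hae, integral_biUnion_finset Δ hΔ
    (fun δ hδ δ' hδ' => hdisj δ hδ δ' hδ') fun δ hδ => ha.mono_set (hsub δ hδ)]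
  calc ∑ δ ∈ Δ, ∫ x in δ, (∑ j, a j * p x j) ^ 2 ∂μ ≤ ∑ δ ∈ Δ, V * B * ∑ j ∈ A δ, a j ^ 2 :=
        Finset.sum_le_sum hcell
    _ ≤ V * B * (M * ∑ j, a j ^ 2) := by
        rw [← Finset.mul_sum]
        gcongr
        exact sum_sum_filter_le_mul Δ _
          (fun j => (ncard_activeCells_eq_card_filter j).symm.trans_le (hcells j))
          fun j => sq_nonneg _
    _ = M * B * V * ∑ j, a j ^ 2 := by ring

end LocalBasis

lemma abs_le_eNorm {K : ℕ} (v : Fin K → ℝ) (k : Fin K) : |v k| ≤ eNorm v := by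
  rw [eNorm, ← Real.sqrt_sq_eq_abs]
  exact Real.sqrt_le_sqrt (Finset.single_le_sum (fun i _ => sq_nonneg (v i)) (Finset.mem_univ k))

lemma eNorm_sq {K : ℕ} (v : Fin K → ℝ) : eNorm v ^ 2 = ∑ k, v k ^ 2 :=
  Real.sq_sqrt (Finset.sum_nonneg fun k _ => sq_nonneg (v k))

section Partition

variable {d K : ℕ} {𝒳 : Set (Euc d)} {Δ : Finset (Set (Euc d))} {p : Euc d → Fin K → ℝ}
  {h c₀ c₂ : ℝ} {Mb : ℕ}

lemma abs_le_of_mem_closure_cover (hcover : (⋃ δ ∈ Δ, closure δ) = 𝒳)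
    (hPB : ∀ δ ∈ Δ, ∀ x ∈ closure δ, eNorm (p x) ≤ c₂) {x : Euc d} (hx : x ∈ 𝒳) (k : Fin K) :
    |p x k| ≤ c₂ := by
  obtain ⟨δ, hδ, hxδ⟩ := Set.mem_iUnion₂.1 (hcover.symm ▸ hx)
  exact (abs_le_eNorm _ k).trans (hPB δ hδ x hxδ)

lemma setIntegral_sq_sum_bounds (h𝒳 : IsCompact 𝒳) (hh : 0 < h)
    (hpoly : ∀ δ ∈ Δ, IsOpenPolyhedron δ) (hsub : ∀ δ ∈ Δ, δ ⊆ 𝒳)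
    (hdisj : ∀ δ ∈ Δ, ∀ δ' ∈ Δ, δ ≠ δ' → Disjoint δ δ') (hcover : (⋃ δ ∈ Δ, closure δ) = 𝒳)
    (hdiam : ∀ δ ∈ Δ, diam δ ≤ h)
    (hA : ∀ k, (activeCells Δ p k).ncard ≤ Mb ∧
      {k' | ¬ ∀ x ∈ ⋃₀ activeCells Δ p k, p x k' = 0}.ncard ≤ Mb)
    (hloc : ∀ k (a : Fin K → ℝ),
      c₀ * a k ^ 2 * h ^ d ≤ ∫ x in ⋃₀ activeCells Δ p k, (∑ j, a j * p x j) ^ 2)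
    (hPB : ∀ δ ∈ Δ, ∀ x ∈ closure δ, eNorm (p x) ≤ c₂) (a : Fin K → ℝ)
    (ha : IntegrableOn (fun x => (∑ j, a j * p x j) ^ 2) 𝒳) :
    c₀ * h ^ d * ∑ k, a k ^ 2 ≤ Mb * ∫ x in 𝒳, (∑ j, a j * p x j) ^ 2 ∧
      ∫ x in 𝒳, (∑ j, a j * p x j) ^ 2 ≤
        Mb * c₂ ^ 2 * (volume.real (ball (0 : Euc d) 1) * h ^ d) * ∑ k, a k ^ 2 := by
  have hΔ : ∀ δ ∈ Δ, MeasurableSet δ := fun δ hδ => (hpoly δ hδ).isOpen.measurableSet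
  refine ⟨mul_sum_sq_le_setIntegral h𝒳.measurableSet hΔ hsub hdisj (fun k => (hA k).2)
    (fun k a => (hloc k a).trans_eq' (by ring)) ha, ?_⟩
  refine setIntegral_sq_le_of_cells (sq_nonneg c₂) (by positivity) hΔ hsub hdisj
    (ae_eq_biUnion_of_closure_cover hpoly hsub hcover)
    (fun δ hδ => volume_le_of_diam_le (h𝒳.isBounded.subset (hsub δ hδ)) hh.le (hdiam δ hδ))
    (fun k => (hA k).1) (fun δ hδ x hx => ?_) ha
  rw [← eNorm_sq]
  exact pow_le_pow_left₀ (Real.sqrt_nonneg _) (hPB δ hδ x (subset_closure hx)) 2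

lemma quadForm_gramMatrix_bounds {f : Euc d → ℝ} {f₁ f₂ : ℝ} (hf₁ : 0 ≤ f₁) (hf₂ : 0 ≤ f₂)
    (h𝒳 : IsCompact 𝒳) (hfm : Measurable f) (hf : ∀ x ∈ 𝒳, f₁ ≤ f x ∧ f x ≤ f₂) (hh : 0 < h)
    (hpoly : ∀ δ ∈ Δ, IsOpenPolyhedron δ) (hsub : ∀ δ ∈ Δ, δ ⊆ 𝒳)
    (hdisj : ∀ δ ∈ Δ, ∀ δ' ∈ Δ, δ ≠ δ' → Disjoint δ δ') (hcover : (⋃ δ ∈ Δ, closure δ) = 𝒳)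
    (hdiam : ∀ δ ∈ Δ, diam δ ≤ h) (hpm : ∀ k, Measurable fun x => p x k)
    (hA : ∀ k, (activeCells Δ p k).ncard ≤ Mb ∧
      {k' | ¬ ∀ x ∈ ⋃₀ activeCells Δ p k, p x k' = 0}.ncard ≤ Mb)
    (hloc : ∀ k (a : Fin K → ℝ),
      c₀ * a k ^ 2 * h ^ d ≤ ∫ x in ⋃₀ activeCells Δ p k, (∑ j, a j * p x j) ^ 2)
    (hPB : ∀ δ ∈ Δ, ∀ x ∈ closure δ, eNorm (p x) ≤ c₂) (a : Fin K → ℝ) :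
    f₁ * c₀ * h ^ d * ∑ k, a k ^ 2 ≤ Mb * quadForm (gramMatrix (volume.restrict 𝒳) p f) a ∧
      quadForm (gramMatrix (volume.restrict 𝒳) p f) a ≤
        f₂ * Mb * c₂ ^ 2 * volume.real (ball (0 : Euc d) 1) * h ^ d * ∑ k, a k ^ 2 := by
  have h𝒳m := h𝒳.measurableSet
  have h𝒳fin := h𝒳.measure_lt_top (μ := volume)
  have hpB := fun y hy => abs_le_of_mem_closure_cover hcover hPB (x := y) hy
  have hint1 := integrableOn_gram_entry h𝒳m h𝒳fin hpm measurable_const hpB (G := 1)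
    fun _ _ => abs_one.le
  have hintf := integrableOn_gram_entry h𝒳m h𝒳fin hpm hfm hpB
    fun y hy => abs_le_max_abs_abs (hf y hy).1 (hf y hy).2
  have hf_ae := ae_restrict_of_forall_mem (μ := volume) h𝒳m hf
  have hQlow := mul_quadForm_gramMatrix_le hint1 hintf (c := f₁)
    (hf_ae.mono fun x hx => (mul_one f₁).trans_le hx.1) a
  have hQup := quadForm_gramMatrix_le_mul hint1 hintf (c := f₂)
    (hf_ae.mono fun x hx => hx.2.trans_eq (mul_one f₂).symm) a
  have hone : quadForm (gramMatrix (volume.restrict 𝒳) p fun _ => 1) a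
      = ∫ x in 𝒳, (∑ j, a j * p x j) ^ 2 := by
    simp only [quadForm_gramMatrix hint1, mul_one]
  rw [hone] at hQlow hQup
  obtain ⟨hlow, hup⟩ := setIntegral_sq_sum_bounds h𝒳 hh hpoly hsub hdisj hcover hdiam hA hloc
    hPB a (by simpa only [mul_one, IntegrableOn] using integrable_sq_sum_mul hint1 a)
  constructor
  · calc f₁ * c₀ * h ^ d * ∑ k, a k ^ 2 = f₁ * (c₀ * h ^ d * ∑ k, a k ^ 2) := by ring
      _ ≤ f₁ * (Mb * ∫ x in 𝒳, (∑ j, a j * p x j) ^ 2) := by gcongr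
      _ = Mb * (f₁ * ∫ x in 𝒳, (∑ j, a j * p x j) ^ 2) := by ring
      _ ≤ Mb * quadForm (gramMatrix (volume.restrict 𝒳) p f) a := by gcongr
  · exact hQup.trans ((mul_le_mul_of_nonneg_left hup hf₂).trans_eq (by ring))

theorem quadForm_inv_gramMatrix_mulVec_bounds {n : ℕ} {f σsq : Euc d → ℝ}
    {f₁ f₂ σ₁ σ₂ c₁ β : ℝ} (hf₁ : 0 < f₁) (hσ₁ : 0 < σ₁) (hc₀ : 0 < c₀) (hc₁ : 0 < c₁)
    (hβ : 0 < β) (hβge : f₂ * Mb * c₂ ^ 2 * volume.real (ball (0 : Euc d) 1) ≤ β)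
    (h𝒳 : IsCompact 𝒳) (h𝒳ne : 𝒳.Nonempty) (hfm : Measurable f)
    (hf : ∀ x ∈ 𝒳, f₁ ≤ f x ∧ f x ≤ f₂) (hσm : Measurable σsq)
    (hσ : ∀ x ∈ 𝒳, σ₁ ≤ σsq x ∧ σsq x ≤ σ₂) (hh : 0 < h) (hpoly : ∀ δ ∈ Δ, IsOpenPolyhedron δ)
    (hsub : ∀ δ ∈ Δ, δ ⊆ 𝒳) (hdisj : ∀ δ ∈ Δ, ∀ δ' ∈ Δ, δ ≠ δ' → Disjoint δ δ')
    (hcover : (⋃ δ ∈ Δ, closure δ) = 𝒳) (hdiam : ∀ δ ∈ Δ, diam δ ≤ h)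
    (hpm : ∀ k, Measurable fun x => p x k)
    (hA : ∀ k, (activeCells Δ p k).ncard ≤ Mb ∧
      {k' | ¬ ∀ x ∈ ⋃₀ activeCells Δ p k, p x k' = 0}.ncard ≤ Mb)
    (hloc : ∀ k (a : Fin K → ℝ),
      c₀ * a k ^ 2 * h ^ d ≤ ∫ x in ⋃₀ activeCells Δ p k, (∑ j, a j * p x j) ^ 2)
    (hPB : ∀ δ ∈ Δ, ∀ x ∈ closure δ, eNorm (p x) ≤ c₂) {v : Fin K → ℝ}
    (hv : c₁ / h ^ n ≤ eNorm v ∧ eNorm v ≤ c₂ / h ^ n) :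
    let Q := gramMatrix (volume.restrict 𝒳) p f
    let S := gramMatrix (volume.restrict 𝒳) p fun x => σsq x * f x
    σ₁ * c₁ ^ 2 / β / (h ^ d * h ^ (2 * n)) ≤ quadForm S (Q⁻¹ *ᵥ v) ∧
      quadForm S (Q⁻¹ *ᵥ v) ≤ σ₂ * c₂ ^ 2 * Mb / (f₁ * c₀) / (h ^ d * h ^ (2 * n)) := by
  intro Q S
  obtain ⟨y, hy⟩ := h𝒳ne
  have hf₂ : 0 < f₂ := hf₁.trans_le ((hf y hy).1.trans (hf y hy).2)
  have hσ₂ : 0 < σ₂ := hσ₁.trans_le ((hσ y hy).1.trans (hσ y hy).2)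
  have hQ := quadForm_gramMatrix_bounds hf₁.le hf₂.le h𝒳 hfm hf hh hpoly hsub hdisj hcover hdiam
    hpm hA hloc hPB
  have hS := quadForm_gramMatrix_mul_bounds h𝒳.measurableSet (h𝒳.measure_lt_top (μ := volume))
    hpm hfm hσm (fun x hx => abs_le_of_mem_closure_cover hcover hPB hx)
    (fun x hx => ⟨hf₁.le.trans (hf x hx).1, (hf x hx).2⟩) hσ
  have ht₁ : (c₁ / h ^ n) ^ 2 ≤ ∑ k, v k ^ 2 := eNorm_sq v ▸ pow_le_pow_left₀ (by positivity) hv.1 2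
  have ht₂ : ∑ k, v k ^ 2 ≤ (c₂ / h ^ n) ^ 2 :=
    eNorm_sq v ▸ pow_le_pow_left₀ (Real.sqrt_nonneg _) hv.2 2
  have ht : 0 < ∑ k, v k ^ 2 := (by positivity : 0 < (c₁ / h ^ n) ^ 2).trans_le ht₁
  have hMb : 0 < (Mb : ℝ) := by
    refine Nat.cast_pos.2 (Nat.pos_of_ne_zero fun h0 => ?_)
    have := (mul_pos (by positivity : 0 < f₁ * c₀ * h ^ d) ht).trans_le (hQ v).1
    simp [h0] at this
  obtain ⟨hw₁, hw₂⟩ := quadForm_inv_mulVec_bounds gramMatrix_isSymm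
    (by positivity : 0 < f₁ * c₀ * h ^ d / Mb) (by positivity : 0 < β * h ^ d)
    (fun a => by rw [div_mul_eq_mul_div, div_le_iff₀' hMb]; exact (hQ a).1)
    (fun a => (hQ a).2.trans (by gcongr)) v
  constructor
  · calc σ₁ * c₁ ^ 2 / β / (h ^ d * h ^ (2 * n))
        = σ₁ * ((c₁ / h ^ n) ^ 2 / (β * h ^ d)) := by rw [pow_mul']; field_simp
      _ ≤ σ₁ * ((∑ k, v k ^ 2) / (β * h ^ d)) := by gcongr
      _ ≤ σ₁ * quadForm Q (Q⁻¹ *ᵥ v) := by gcongr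
      _ ≤ quadForm S (Q⁻¹ *ᵥ v) := (hS _).1
  · calc quadForm S (Q⁻¹ *ᵥ v) ≤ σ₂ * quadForm Q (Q⁻¹ *ᵥ v) := (hS _).2
      _ ≤ σ₂ * ((∑ k, v k ^ 2) / (f₁ * c₀ * h ^ d / Mb)) := by gcongr
      _ ≤ σ₂ * ((c₂ / h ^ n) ^ 2 / (f₁ * c₀ * h ^ d / Mb)) := by gcongr
      _ = σ₂ * c₂ ^ 2 * Mb / (f₁ * c₀) / (h ^ d * h ^ (2 * n)) := by
          rw [pow_mul']; field_simp

end Partition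

theorem statement7_general (d : ℕ) (q : Fin d → ℕ)
    (ρqu Cqu f₁ f₂ σ₁ σ₂ c₀ c₁ c₂ : ℝ) (Mb : ℕ)
    (hf₁ : 0 < f₁) (hσ₁ : 0 < σ₁) (hc₀ : 0 < c₀) (hc₁ : 0 < c₁) :
    ∃ c C : ℝ, 0 < c ∧ c ≤ C ∧
      ∀ (𝒳 : Set (Euc d)) (f σsq : Euc d → ℝ) (Δ : Finset (Set (Euc d))) (h : ℝ)
        (K : ℕ) (p : Euc d → Fin K → ℝ),
        -- domain, density and conditional variance
        IsCompact 𝒳 → IsConnected 𝒳 →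
        Measurable f → ContinuousOn f 𝒳 →
        (∀ x ∈ 𝒳, f₁ ≤ f x ∧ f x ≤ f₂) →
        (∫ x in 𝒳, f x) = 1 →
        Measurable σsq → ContinuousOn σsq 𝒳 →
        (∀ x ∈ 𝒳, σ₁ ≤ σsq x ∧ σsq x ≤ σ₂) →
        -- quasi-uniform partition with maximal mesh h
        0 < h →
        (∀ δ ∈ Δ, IsOpenPolyhedron δ) →
        (∀ δ ∈ Δ, δ ⊆ 𝒳) →
        (∀ δ ∈ Δ, ∀ δ' ∈ Δ, δ ≠ δ' → Disjoint δ δ') →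
        (⋃ δ ∈ Δ, closure δ) = 𝒳 →
        (∀ δ ∈ Δ, ∃ z₁ r₁ z₂ r₂, 0 < r₁ ∧ Metric.closedBall z₁ r₁ ⊆ δ ∧
            δ ⊆ Metric.closedBall z₂ r₂ ∧ ρqu * r₂ ≤ r₁) →
        (∀ δ ∈ Δ, ∀ δ' ∈ Δ, Metric.diam δ ≤ Cqu * Metric.diam δ') →
        (∀ δ ∈ Δ, Metric.diam δ ≤ h) →
        (∃ δ ∈ Δ, Metric.diam δ = h) →
        -- local basis assumptions (a), (b), (c)
        1 ≤ K →
        (∀ k : Fin K, Measurable (fun x => p x k)) →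
        (∀ k : Fin K,
          IsConnected (⋃₀ {δ : Set (Euc d) | δ ∈ Δ ∧ ¬ ∀ x ∈ δ, p x k = 0}) ∧
          Set.ncard {δ : Set (Euc d) | δ ∈ Δ ∧ ¬ ∀ x ∈ δ, p x k = 0} ≤ Mb ∧
          Set.ncard {k' : Fin K |
            ¬ ∀ x ∈ ⋃₀ {δ : Set (Euc d) | δ ∈ Δ ∧ ¬ ∀ x ∈ δ, p x k = 0},
              p x k' = 0} ≤ Mb) →
        (∀ (k : Fin K) (a : Fin K → ℝ),
          c₀ * a k ^ 2 * h ^ d ≤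
            ∫ x in ⋃₀ {δ : Set (Euc d) | δ ∈ Δ ∧ ¬ ∀ x ∈ δ, p x k = 0},
              (∑ j, a j * p x j) ^ 2) →
        (∀ δ ∈ Δ, ∀ x ∈ closure δ,
          c₁ / h ^ mOrder q ≤ eNorm (fun k => mderiv q (fun z => p z k) x) ∧
          eNorm (fun k => mderiv q (fun z => p z k) x) ≤ c₂ / h ^ mOrder q) →
        (∀ δ ∈ Δ, ∀ x ∈ closure δ, eNorm (p x) ≤ c₂) →
        -- conclusion: two-sided bound on the asymptotic variance function
        (let Qm : Matrix (Fin K) (Fin K) ℝ := fun k l => ∫ x in 𝒳, p x k * p x l * f x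
        let Sig₀ : Matrix (Fin K) (Fin K) ℝ :=
          fun k l => ∫ x in 𝒳, p x k * p x l * σsq x * f x
        ∀ x ∈ 𝒳,
          c / (h ^ d * h ^ (2 * mOrder q))
              ≤ quadForm Sig₀ (Qm⁻¹.mulVec (fun k => mderiv q (fun z => p z k) x)) ∧
          quadForm Sig₀ (Qm⁻¹.mulVec (fun k => mderiv q (fun z => p z k) x))
              ≤ C / (h ^ d * h ^ (2 * mOrder q))) := by
  -- `max _ 1`: for arbitrary parameters the constant `f₂ Mb c₂² |B(0,1)|` need not be positive
  set β := max (f₂ * Mb * c₂ ^ 2 * volume.real (ball (0 : Euc d) 1)) 1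
  have hβ : 0 < β := lt_max_of_lt_right one_pos
  refine ⟨σ₁ * c₁ ^ 2 / β, max (σ₁ * c₁ ^ 2 / β) (σ₂ * c₂ ^ 2 * Mb / (f₁ * c₀)), by positivity,
    le_max_left _ _, ?_⟩
  intro 𝒳 f σsq Δ h K p h𝒳 _ hfm _ hf _ hσm _ hσ hh hpoly hsub hdisj hcover _ _ hdiam _ _ hpm hA
    hloc hC hPB Qm Sig₀ x hx
  have hSig : Sig₀ = gramMatrix (volume.restrict 𝒳) p fun y => σsq y * f y := by
    ext k l
    simp only [Sig₀, gramMatrix, mul_assoc]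
  obtain ⟨δ, hδ, hxδ⟩ := Set.mem_iUnion₂.1 (hcover.symm ▸ hx)
  obtain ⟨hlo, hhi⟩ := quadForm_inv_gramMatrix_mulVec_bounds hf₁ hσ₁ hc₀ hc₁ hβ
    (le_max_left _ _) h𝒳 ⟨x, hx⟩ hfm hf hσm hσ hh hpoly hsub hdisj hcover hdiam hpm
    (fun k => (hA k).2) hloc hPB (hC δ hδ x hxδ)
  rw [hSig]
  exact ⟨hlo, hhi.trans (by gcongr; exact le_max_right _ _)⟩

/-- Lemma SA-4 for the uncorrected estimator, `j = 0`.
Under the quasi-uniform partition and local basis assumptions, there are constants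
`0 < c ≤ C`, depending only on the constants of the assumptions, such that
`c·h^{−d−2[q]} ≤ inf_x Ω₀(x) ≤ sup_x Ω₀(x) ≤ C·h^{−d−2[q]}` where
`Ω₀(x) = γ_q(x)'Σ₀γ_q(x)`, `γ_q(x)' = ∂^q p(x)' Q⁻¹`,
`Q = ∫ p p' f` and `Σ₀ = ∫ p p' σ² f`. -/
theorem statement7 (d m : ℕ) (hd : 1 ≤ d) (q : Fin d → ℕ) (hqm : mOrder q < m)
    (ρqu Cqu f₁ f₂ σ₁ σ₂ c₀ c₁ c₂ : ℝ) (Mb : ℕ)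
    (hρqu : 0 < ρqu) (hf₁ : 0 < f₁) (hσ₁ : 0 < σ₁) (hc₀ : 0 < c₀) (hc₁ : 0 < c₁) :
    ∃ c C : ℝ, 0 < c ∧ c ≤ C ∧
      ∀ (𝒳 : Set (Euc d)) (f σsq : Euc d → ℝ) (Δ : Finset (Set (Euc d))) (h : ℝ)
        (K : ℕ) (p : Euc d → Fin K → ℝ),
        -- domain, density and conditional variance
        IsCompact 𝒳 → IsConnected 𝒳 →
        Measurable f → ContinuousOn f 𝒳 →
        (∀ x ∈ 𝒳, f₁ ≤ f x ∧ f x ≤ f₂) →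
        (∫ x in 𝒳, f x) = 1 →
        Measurable σsq → ContinuousOn σsq 𝒳 →
        (∀ x ∈ 𝒳, σ₁ ≤ σsq x ∧ σsq x ≤ σ₂) →
        -- quasi-uniform partition with maximal mesh h
        0 < h →
        (∀ δ ∈ Δ, IsOpenPolyhedron δ) →
        (∀ δ ∈ Δ, δ ⊆ 𝒳) →
        (∀ δ ∈ Δ, ∀ δ' ∈ Δ, δ ≠ δ' → Disjoint δ δ') →
        (⋃ δ ∈ Δ, closure δ) = 𝒳 →
        (∀ δ ∈ Δ, ∃ z₁ r₁ z₂ r₂, 0 < r₁ ∧ Metric.closedBall z₁ r₁ ⊆ δ ∧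
            δ ⊆ Metric.closedBall z₂ r₂ ∧ ρqu * r₂ ≤ r₁) →
        (∀ δ ∈ Δ, ∀ δ' ∈ Δ, Metric.diam δ ≤ Cqu * Metric.diam δ') →
        (∀ δ ∈ Δ, Metric.diam δ ≤ h) →
        (∃ δ ∈ Δ, Metric.diam δ = h) →
        -- local basis assumptions (a), (b), (c)
        1 ≤ K →
        (∀ k : Fin K, Measurable (fun x => p x k)) →
        (∀ k : Fin K,
          IsConnected (⋃₀ {δ : Set (Euc d) | δ ∈ Δ ∧ ¬ ∀ x ∈ δ, p x k = 0}) ∧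
          Set.ncard {δ : Set (Euc d) | δ ∈ Δ ∧ ¬ ∀ x ∈ δ, p x k = 0} ≤ Mb ∧
          Set.ncard {k' : Fin K |
            ¬ ∀ x ∈ ⋃₀ {δ : Set (Euc d) | δ ∈ Δ ∧ ¬ ∀ x ∈ δ, p x k = 0},
              p x k' = 0} ≤ Mb) →
        (∀ (k : Fin K) (a : Fin K → ℝ),
          c₀ * a k ^ 2 * h ^ d ≤
            ∫ x in ⋃₀ {δ : Set (Euc d) | δ ∈ Δ ∧ ¬ ∀ x ∈ δ, p x k = 0},
              (∑ j, a j * p x j) ^ 2) →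
        (∀ δ ∈ Δ, ∀ x ∈ closure δ,
          c₁ / h ^ mOrder q ≤ eNorm (fun k => mderiv q (fun z => p z k) x) ∧
          eNorm (fun k => mderiv q (fun z => p z k) x) ≤ c₂ / h ^ mOrder q) →
        (∀ δ ∈ Δ, ∀ x ∈ closure δ, eNorm (p x) ≤ c₂) →
        -- conclusion: two-sided bound on the asymptotic variance function
        (let Qm : Matrix (Fin K) (Fin K) ℝ := fun k l => ∫ x in 𝒳, p x k * p x l * f x
        let Sig₀ : Matrix (Fin K) (Fin K) ℝ :=
          fun k l => ∫ x in 𝒳, p x k * p x l * σsq x * f x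
        ∀ x ∈ 𝒳,
          c / (h ^ d * h ^ (2 * mOrder q))
              ≤ quadForm Sig₀ (Qm⁻¹.mulVec (fun k => mderiv q (fun z => p z k) x)) ∧
          quadForm Sig₀ (Qm⁻¹.mulVec (fun k => mderiv q (fun z => p z k) x))
              ≤ C / (h ^ d * h ^ (2 * mOrder q))) :=
  statement7_general d q ρqu Cqu f₁ f₂ σ₁ σ₂ c₀ c₁ c₂ Mb hf₁ hσ₁ hc₀ hc₁
end
end
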